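/- Let a', b', c' be real numbers with a' ≠ 0 and b'(2c'−a') > 0. If the Chen system with parameters a', b', c' is smoothly equivalent to the Lorenz system with parameters a, b, c for some real numbers a, b, c, then M₀(a',b',c') = 0. -/

import Mathlib

set_option maxHeartbeats 1600000

noncomputable def jacobianMatrix {n : ℕ} (h : (Fin n → ℝ) → (Fin n → ℝ)) (x : Fin n → ℝ) :
    Matrix (Fin n) (Fin n) ℝ :=
  LinearMap.toMatrix' (fderiv ℝ h x).toLinearMap

def SmoothlyEquivalent {n : ℕ} (f g : (Fin n → ℝ) → (Fin n → ℝ)) : Prop :=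
  ∃ h hinv : (Fin n → ℝ) → (Fin n → ℝ),
    Function.LeftInverse hinv h ∧ Function.RightInverse hinv h ∧
    ContDiff ℝ (⊤ : ℕ∞) h ∧ ContDiff ℝ (⊤ : ℕ∞) hinv ∧
    ∀ x, IsUnit (jacobianMatrix h x).det ∧
      f x = ((jacobianMatrix h x)⁻¹).mulVec (g (h x))

def lorenz (a b c : ℝ) (p : Fin 3 → ℝ) : Fin 3 → ℝ :=
  ![a * (p 1 - p 0), c * p 0 - p 0 * p 2 - p 1, p 0 * p 1 - b * p 2]

def chen (a b c : ℝ) (p : Fin 3 → ℝ) : Fin 3 → ℝ :=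
  ![a * (p 1 - p 0), (c - a) * p 0 - p 0 * p 2 + c * p 1, p 0 * p 1 - b * p 2]

noncomputable def M0 (u v w d : ℝ) : ℝ :=
  Matrix.det !![1, -u, v, -w, 0;
                0, 1, -u, v, -w;
                u - 1, u + v - u ^ 2 - d, (u - 1) * d, 0, 0;
                0, u - 1, u + v - u ^ 2 - d, (u - 1) * d, 0;
                0, 0, u - 1, u + v - u ^ 2 - d, (u - 1) * d]

noncomputable def M0Chen (a' b' c' : ℝ) : ℝ :=
  M0 (a' + b' - c') (a' ^ 2 + a' * b' - 2 * a' * c' - b' * c')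
    (-(a' * b' * (2 * c' - a'))) (b' * c')

/-! ### Auxiliary material -/

lemma M0_lorenz (a b c : ℝ) :
    M0 (a + b + 1) (a * b + a + b - a * c) (a * b * (1 - c)) (a * b + b * c) = 0 := by
  rw [M0, ← Matrix.exists_mulVec_eq_zero_iff]
  refine ⟨![b^4, b^3, b^2, b, 1], ?_, ?_⟩
  · intro h
    have := congrFun h 4
    simp at this
  · funext i
    fin_cases i <;>
      simp [Matrix.mulVec, dotProduct, Fin.sum_univ_five] <;> ring

def chenJ (a b c : ℝ) (p : Fin 3 → ℝ) : Matrix (Fin 3) (Fin 3) ℝ :=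
  !![-a, a, 0; c - a - p 2, c, -(p 0); p 1, p 0, -b]

def lorenzJ (a b c : ℝ) (p : Fin 3 → ℝ) : Matrix (Fin 3) (Fin 3) ℝ :=
  !![-a, a, 0; c - p 2, -1, -(p 0); p 1, p 0, -b]

noncomputable def matCLM (J : Matrix (Fin 3) (Fin 3) ℝ) : (Fin 3 → ℝ) →L[ℝ] (Fin 3 → ℝ) :=
  LinearMap.toContinuousLinearMap (Matrix.toLin' J)

lemma matCLM_apply (J : Matrix (Fin 3) (Fin 3) ℝ) (v : Fin 3 → ℝ) (i : Fin 3) :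
    matCLM J v i = J i 0 * v 0 + J i 1 * v 1 + J i 2 * v 2 := by
  simp [matCLM, Matrix.toLin'_apply, Matrix.mulVec, dotProduct, Fin.sum_univ_three]

lemma toMatrix'_matCLM (J : Matrix (Fin 3) (Fin 3) ℝ) :
    LinearMap.toMatrix' (matCLM J).toLinearMap = J := by
  rw [matCLM]
  rw [show (LinearMap.toContinuousLinearMap (Matrix.toLin' J)).toLinearMap
      = Matrix.toLin' J from rfl]
  exact LinearMap.toMatrix'_toLin' J

section derivs
variable (a b c : ℝ) (p : Fin 3 → ℝ)

private lemma h0' : HasFDerivAt (fun x : Fin 3 → ℝ => x 0)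
    (ContinuousLinearMap.proj (R := ℝ) (φ := fun _ : Fin 3 => ℝ) 0) p :=
  (ContinuousLinearMap.proj (R := ℝ) (φ := fun _ : Fin 3 => ℝ) 0).hasFDerivAt
private lemma h1' : HasFDerivAt (fun x : Fin 3 → ℝ => x 1)
    (ContinuousLinearMap.proj (R := ℝ) (φ := fun _ : Fin 3 => ℝ) 1) p :=
  (ContinuousLinearMap.proj (R := ℝ) (φ := fun _ : Fin 3 => ℝ) 1).hasFDerivAt
private lemma h2' : HasFDerivAt (fun x : Fin 3 → ℝ => x 2)
    (ContinuousLinearMap.proj (R := ℝ) (φ := fun _ : Fin 3 => ℝ) 2) p :=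
  (ContinuousLinearMap.proj (R := ℝ) (φ := fun _ : Fin 3 => ℝ) 2).hasFDerivAt

lemma hasFDerivAt_chen : HasFDerivAt (chen a b c) (matCLM (chenJ a b c p)) p := by
  apply hasFDerivAt_pi''
  intro i
  fin_cases i
  · exact (((h1' p).sub (h0' p)).const_mul a).congr_fderiv
      (by ext v; simp [matCLM_apply, chenJ]; ring)
  · exact ((((h0' p).const_mul (c - a)).sub ((h0' p).mul (h2' p))).add
      ((h1' p).const_mul c)).congr_fderiv
      (by ext v; simp [matCLM_apply, chenJ]; ring)
  · exact (((h0' p).mul (h1' p)).sub ((h2' p).const_mul b)).congr_fderiv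
      (by ext v; simp [matCLM_apply, chenJ]; ring)

lemma hasFDerivAt_lorenz : HasFDerivAt (lorenz a b c) (matCLM (lorenzJ a b c p)) p := by
  apply hasFDerivAt_pi''
  intro i
  fin_cases i
  · exact (((h1' p).sub (h0' p)).const_mul a).congr_fderiv
      (by ext v; simp [matCLM_apply, lorenzJ]; ring)
  · exact ((((h0' p).const_mul c).sub ((h0' p).mul (h2' p))).sub (h1' p)).congr_fderiv
      (by ext v; simp [matCLM_apply, lorenzJ]; ring)
  · exact (((h0' p).mul (h1' p)).sub ((h2' p).const_mul b)).congr_fderiv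
      (by ext v; simp [matCLM_apply, lorenzJ]; ring)

end derivs

section conjsec
variable {f g h : (Fin 3 → ℝ) → (Fin 3 → ℝ)}

lemma jac_mulVec (h : (Fin 3 → ℝ) → (Fin 3 → ℝ)) (x v : Fin 3 → ℝ) :
    (jacobianMatrix h x).mulVec v = fderiv ℝ h x v := by
  rw [jacobianMatrix, ← Matrix.toLin'_apply, Matrix.toLin'_toMatrix']
  rfl

lemma key_identity
    (hmain : ∀ x, IsUnit (jacobianMatrix h x).det ∧
      f x = ((jacobianMatrix h x)⁻¹).mulVec (g (h x)))
    (x : Fin 3 → ℝ) : g (h x) = fderiv ℝ h x (f x) := by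
  rw [← jac_mulVec, (hmain x).2, Matrix.mulVec_mulVec,
    Matrix.mul_nonsing_inv _ (hmain x).1, Matrix.one_mulVec]

lemma conj_matrix (hch : ContDiff ℝ (⊤ : ℕ∞) h)
    (hmain : ∀ x, IsUnit (jacobianMatrix h x).det ∧
      f x = ((jacobianMatrix h x)⁻¹).mulVec (g (h x)))
    {p : Fin 3 → ℝ} (hp : f p = 0)
    {Cf Cg : (Fin 3 → ℝ) →L[ℝ] (Fin 3 → ℝ)}
    (hf : HasFDerivAt f Cf p) (hg : HasFDerivAt g Cg (h p)) :
    LinearMap.toMatrix' Cg.toLinearMap * jacobianMatrix h p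
      = jacobianMatrix h p * LinearMap.toMatrix' Cf.toLinearMap := by
  have hdh : Differentiable ℝ h := hch.differentiable (by simp)
  have hLd : Differentiable ℝ (fderiv ℝ h) := (hch.fderiv_right (m := 1) (by exact WithTop.coe_le_coe.mpr le_top)).differentiable one_ne_zero
  have h1 : HasFDerivAt (fun x => g (h x)) (Cg.comp (fderiv ℝ h p)) p :=
    hg.comp p (hdh p).hasFDerivAt
  have hB := isBoundedBilinearMap_apply
    (𝕜 := ℝ) (E := Fin 3 → ℝ) (F := Fin 3 → ℝ)
  have h2 : HasFDerivAt (fun x => fderiv ℝ h x (f x))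
      ((hB.deriv (fderiv ℝ h p, f p)).comp
        ((fderiv ℝ (fderiv ℝ h) p).prod Cf)) p := by
    exact (hB.hasFDerivAt (fderiv ℝ h p, f p)).comp p
      (HasFDerivAt.prodMk ((hLd p).hasFDerivAt) hf)
  have hfun : (fun x => g (h x)) = fun x => fderiv ℝ h x (f x) :=
    funext (key_identity hmain)
  rw [hfun] at h1
  have heq := h1.unique h2
  have hclm : Cg.comp (fderiv ℝ h p) = (fderiv ℝ h p).comp Cf := by
    rw [heq]; ext v
    simp [hB.deriv_apply, hp]
  have := congrArg (fun (L : (Fin 3 → ℝ) →L[ℝ] (Fin 3 → ℝ)) =>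
    LinearMap.toMatrix' L.toLinearMap) hclm
  simpa [ContinuousLinearMap.coe_comp, LinearMap.toMatrix'_comp, jacobianMatrix] using this

end conjsec

lemma conj_eqs {A A' M : Matrix (Fin 3) (Fin 3) ℝ} (hM : IsUnit M.det)
    (hc : A' * M = M * A) :
    A'.trace = A.trace ∧ (A' * A').trace = (A * A).trace ∧ A'.det = A.det := by
  have hA' : A' = M * A * M⁻¹ := by
    rw [← hc, Matrix.mul_assoc, Matrix.mul_nonsing_inv _ hM, Matrix.mul_one]
  have hdetM : M.det ≠ 0 := by
    simpa [isUnit_iff_ne_zero] using hM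
  refine ⟨?_, ?_, ?_⟩
  · rw [hA', Matrix.trace_mul_comm, ← Matrix.mul_assoc,
      Matrix.nonsing_inv_mul _ hM, Matrix.one_mul]
  · have hsq : A' * A' = M * (A * A) * M⁻¹ := by
      rw [hA']
      rw [Matrix.mul_assoc (M * A) M⁻¹ (M * A * M⁻¹), ← Matrix.mul_assoc M⁻¹ (M * A) M⁻¹,
        ← Matrix.mul_assoc M⁻¹ M A, Matrix.nonsing_inv_mul _ hM, Matrix.one_mul]
      simp [Matrix.mul_assoc]
    rw [hsq, Matrix.trace_mul_comm, ← Matrix.mul_assoc,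
      Matrix.nonsing_inv_mul _ hM, Matrix.one_mul]
  · rw [hA', Matrix.det_mul, Matrix.det_mul, Matrix.det_nonsing_inv, Ring.inverse_eq_inv']
    field_simp

/-- trace of lorenzJ -/
lemma trace_lorenzJ (a b c : ℝ) (q : Fin 3 → ℝ) :
    (lorenzJ a b c q).trace = -a + -1 + -b := by
  simp [lorenzJ, Matrix.trace_fin_three]

lemma trace_chenJ (a b c : ℝ) (p : Fin 3 → ℝ) :
    (chenJ a b c p).trace = -a + c + -b := by
  simp [chenJ, Matrix.trace_fin_three]

lemma trsq_lorenzJ (a b c : ℝ) (q : Fin 3 → ℝ) :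
    ((lorenzJ a b c q) * (lorenzJ a b c q)).trace
      = a^2 + 1 + b^2 + 2*a*(c - q 2) - 2*(q 0)^2 := by
  simp [lorenzJ, Matrix.trace_fin_three, Matrix.mul_apply, Fin.sum_univ_three]
  ring

lemma trsq_chenJ (a b c : ℝ) (p : Fin 3 → ℝ) :
    ((chenJ a b c p) * (chenJ a b c p)).trace
      = a^2 + c^2 + b^2 + 2*a*(c - a - p 2) - 2*(p 0)^2 := by
  simp [chenJ, Matrix.trace_fin_three, Matrix.mul_apply, Fin.sum_univ_three]
  ring

lemma det_lorenzJ (a b c : ℝ) (q : Fin 3 → ℝ) :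
    (lorenzJ a b c q).det
      = -a*b - a*(q 0)^2 + a*b*c - a*b*(q 2) - a*((q 0)*(q 1)) := by
  simp [lorenzJ, Matrix.det_fin_three]
  ring

lemma det_chenJ (a b c : ℝ) (p : Fin 3 → ℝ) :
    (chenJ a b c p).det
      = 2*a*b*c - a^2*b - a*b*(p 2) - a*(p 0)^2 - a*((p 0)*(p 1)) := by
  simp [chenJ, Matrix.det_fin_three]
  ring

lemma three_pigeon {α : Type*} {A B C x1 x2 x3 x4 : α}
    (h1 : x1 = A ∨ x1 = B ∨ x1 = C) (h2 : x2 = A ∨ x2 = B ∨ x2 = C)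
    (h3 : x3 = A ∨ x3 = B ∨ x3 = C) (h4 : x4 = A ∨ x4 = B ∨ x4 = C) :
    x1 = x2 ∨ x1 = x3 ∨ x1 = x4 ∨ x2 = x3 ∨ x2 = x4 ∨ x3 = x4 := by
  rcases h1 with rfl | rfl | rfl <;> rcases h2 with rfl | rfl | rfl <;>
    rcases h3 with rfl | rfl | rfl <;> rcases h4 with rfl | rfl | rfl <;> tauto

theorem smooth_equivalence_implies_M0_zero (a' b' c' : ℝ) (ha' : a' ≠ 0)
    (hbc' : b' * (2 * c' - a') > 0)
    (hequiv : ∃ a b c : ℝ, SmoothlyEquivalent (chen a' b' c') (lorenz a b c)) :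
    M0Chen a' b' c' = 0 := by
  obtain ⟨a, b, c, h, hinv, hLI, hRI, hch, hcinv, hmain⟩ := hequiv
  have hb' : b' ≠ 0 := by
    rintro rfl; simp at hbc'
  set t := Real.sqrt (b' * (2 * c' - a')) with htdef
  have ht2 : t ^ 2 = b' * (2 * c' - a') := Real.sq_sqrt hbc'.le
  have htpos : 0 < t := Real.sqrt_pos.mpr hbc'
  set Ep : Fin 3 → ℝ := ![t, t, 2 * c' - a'] with hEpdef
  set Em : Fin 3 → ℝ := ![-t, -t, 2 * c' - a'] with hEmdef
  have hEp0 : Ep 0 = t := rfl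
  have hEp1 : Ep 1 = t := rfl
  have hEp2 : Ep 2 = 2 * c' - a' := rfl
  have hEm0 : Em 0 = -t := rfl
  have hEm1 : Em 1 = -t := rfl
  have hEm2 : Em 2 = 2 * c' - a' := rfl
  have hchen0 : chen a' b' c' 0 = 0 := by
    funext i; fin_cases i <;> simp [chen]
  have hchenEp : chen a' b' c' Ep = 0 := by
    funext i; fin_cases i <;>
      simp [chen, hEp0, hEp1, hEp2] <;> nlinarith [ht2]
  have hchenEm : chen a' b' c' Em = 0 := by
    funext i; fin_cases i <;>
      simp [chen, hEm0, hEm1, hEm2] <;> nlinarith [ht2]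
  -- h maps chen equilibria to lorenz equilibria
  have lor_of : ∀ x, chen a' b' c' x = 0 → lorenz a b c (h x) = 0 := by
    intro x hx
    rw [key_identity hmain x, hx, map_zero]
  have chen_of : ∀ q, lorenz a b c q = 0 → chen a' b' c' (hinv q) = 0 := by
    intro q hq
    have := (hmain (hinv q)).2
    rw [hRI q, hq, Matrix.mulVec_zero] at this
    exact this
  have hinj : Function.Injective h := hLI.injective
  -- classification of chen equilibria
  have chen_class : ∀ p, chen a' b' c' p = 0 → p = 0 ∨ p = Ep ∨ p = Em := by
    intro p hp
    have e0 := congrFun hp 0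
    have e1 := congrFun hp 1
    have e2 := congrFun hp 2
    simp [chen] at e0 e1 e2
    have hyx : p 1 = p 0 := by
      rcases e0 with h | h
      · exact absurd h ha'
      · linarith
    by_cases hx : p 0 = 0
    · left
      funext i; fin_cases i
      · simpa using hx
      · simpa using hyx.trans hx
      · have hb2 : b' * p 2 = 0 := by
          rw [hx] at e2; linarith [e2]
        rcases mul_eq_zero.1 hb2 with h | h
        · exact absurd h hb'
        · simpa using h
    · have hz : p 2 = 2 * c' - a' := by
        have hfac : p 0 * (2 * c' - a' - p 2) = 0 := by
          linear_combination e1 - c' * hyx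
        rcases mul_eq_zero.1 hfac with h | h
        · exact absurd h hx
        · linarith
      have hx2 : (p 0 - t) * (p 0 + t) = 0 := by
        have : p 0 * p 0 = b' * (2 * c' - a') := by
          rw [← hz]; linear_combination e2 - p 0 * hyx
        nlinarith [ht2, this]
      rcases mul_eq_zero.1 hx2 with hh | hh
      · right; left
        funext i; fin_cases i <;> simp [hEpdef] <;> linarith [hyx, hz]
      · right; right
        funext i; fin_cases i <;> simp [hEmdef] <;> linarith [hyx, hz]
  -- pigeonhole: no four distinct lorenz equilibria
  have pigeon : ∀ q1 q2 q3 q4 : Fin 3 → ℝ,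
      lorenz a b c q1 = 0 → lorenz a b c q2 = 0 →
      lorenz a b c q3 = 0 → lorenz a b c q4 = 0 →
      q1 = q2 ∨ q1 = q3 ∨ q1 = q4 ∨ q2 = q3 ∨ q2 = q4 ∨ q3 = q4 := by
    intro q1 q2 q3 q4 hq1 hq2 hq3 hq4
    have c1 := chen_class _ (chen_of _ hq1)
    have c2 := chen_class _ (chen_of _ hq2)
    have c3 := chen_class _ (chen_of _ hq3)
    have c4 := chen_class _ (chen_of _ hq4)
    have key : ∀ x y : Fin 3 → ℝ, hinv x = hinv y → x = y := by
      intro x y hxy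
      rw [← hRI x, hxy, hRI y]
    rcases three_pigeon c1 c2 c3 c4 with H | H | H | H | H | H
    · exact Or.inl (key _ _ H)
    · exact Or.inr (Or.inl (key _ _ H))
    · exact Or.inr (Or.inr (Or.inl (key _ _ H)))
    · exact Or.inr (Or.inr (Or.inr (Or.inl (key _ _ H))))
    · exact Or.inr (Or.inr (Or.inr (Or.inr (Or.inl (key _ _ H)))))
    · exact Or.inr (Or.inr (Or.inr (Or.inr (Or.inr (key _ _ H)))))
  -- a ≠ 0
  have ha : a ≠ 0 := by
    intro ha0
    have four : ∀ k1 k2 k3 k4 : ℝ, b + k1^2 ≠ 0 → b + k2^2 ≠ 0 →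
        b + k3^2 ≠ 0 → b + k4^2 ≠ 0 →
        k1 < k2 → k2 < k3 → k3 < k4 → False := by
      intro k1 k2 k3 k4 n1 n2 n3 n4 l12 l23 l34
      have hP : ∀ k : ℝ, b + k^2 ≠ 0 →
          lorenz a b c ![k, k*(c - c*k^2/(b+k^2)), c*k^2/(b+k^2)] = 0 := by
        intro k hk
        funext i; fin_cases i <;>
          simp [lorenz, ha0] <;> field_simp <;> ring
      have coord : ∀ k k' : ℝ,
          (![k, k*(c - c*k^2/(b+k^2)), c*k^2/(b+k^2)] : Fin 3 → ℝ)
            = ![k', k'*(c - c*k'^2/(b+k'^2)), c*k'^2/(b+k'^2)] → k = k' := by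
        intro k k' hkk
        have := congrFun hkk 0
        simpa using this
      rcases pigeon _ _ _ _ (hP k1 n1) (hP k2 n2) (hP k3 n3) (hP k4 n4) with
        H | H | H | H | H | H <;> [
          (have := coord _ _ H; linarith);
          (have := coord _ _ H; linarith);
          (have := coord _ _ H; linarith);
          (have := coord _ _ H; linarith);
          (have := coord _ _ H; linarith);
          (have := coord _ _ H; linarith)]
    by_cases hdis : b + 1 = 0 ∨ b + 4 = 0 ∨ b + 9 = 0 ∨ b + 16 = 0
    · have hbge : -16 ≤ b := by rcases hdis with h | h | h | h <;> linarith
      have hble : b ≤ -1 := by rcases hdis with h | h | h | h <;> linarith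
      exact four 5 6 7 8 (by intro hcon; nlinarith) (by intro hcon; nlinarith)
        (by intro hcon; nlinarith) (by intro hcon; nlinarith)
        (by norm_num) (by norm_num) (by norm_num)
    · push_neg at hdis
      obtain ⟨d1, d2, d3, d4⟩ := hdis
      exact four 1 2 3 4 (by norm_num; exact d1) (by norm_num; exact d2)
        (by norm_num; exact d3) (by norm_num; exact d4)
        (by norm_num) (by norm_num) (by norm_num)
  -- b ≠ 0
  have hb : b ≠ 0 := by
    intro hb0
    have hP : ∀ k : ℝ, lorenz a b c ![0, 0, k] = 0 := by
      intro k
      funext i; fin_cases i <;> simp [lorenz, hb0]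
    have coord : ∀ k k' : ℝ, (![0, 0, k] : Fin 3 → ℝ) = ![0, 0, k'] → k = k' := by
      intro k k' hkk
      have := congrFun hkk 2
      simpa using this
    rcases pigeon _ _ _ _ (hP 1) (hP 2) (hP 3) (hP 4) with H | H | H | H | H | H <;>
      (have := coord _ _ H; norm_num at this)
  -- b * (c - 1) > 0
  have hbc : b * (c - 1) > 0 := by
    by_contra hbcn
    push_neg at hbcn
    have honly : ∀ q, lorenz a b c q = 0 → q = 0 := by
      intro q hq
      have e0 := congrFun hq 0
      have e1 := congrFun hq 1
      have e2 := congrFun hq 2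
      simp [lorenz] at e0 e1 e2
      have hyx : q 1 = q 0 := by
        rcases e0 with h | h
        · exact absurd h ha
        · linarith
      by_cases hx : q 0 = 0
      · funext i; fin_cases i
        · simpa using hx
        · simpa using hyx.trans hx
        · have hb2 : b * q 2 = 0 := by rw [hx] at e2; linarith [e2]
          rcases mul_eq_zero.1 hb2 with hh | hh
          · exact absurd hh hb
          · simpa using hh
      · exfalso
        have hz : q 2 = c - 1 := by
          have hfac : q 0 * (c - 1 - q 2) = 0 := by
            linear_combination e1 + hyx
          rcases mul_eq_zero.1 hfac with hh | hh
          · exact absurd hh hx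
          · linarith
        have : q 0 * q 0 = b * (c - 1) := by
          rw [← hz]; linear_combination e2 - q 0 * hyx
        linarith [mul_self_pos.mpr hx, this, hbcn]
    have h1 : h Ep = 0 := honly _ (lor_of Ep hchenEp)
    have h2 : h Em = 0 := honly _ (lor_of Em hchenEm)
    have : Ep = Em := hinj (h1.trans h2.symm)
    have := congrFun this 0
    rw [hEp0, hEm0] at this
    linarith
  set s := Real.sqrt (b * (c - 1)) with hsdef
  have hs2 : s ^ 2 = b * (c - 1) := Real.sq_sqrt hbc.le
  have hspos : 0 < s := Real.sqrt_pos.mpr hbc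
  set Qp : Fin 3 → ℝ := ![s, s, c - 1] with hQpdef
  set Qm : Fin 3 → ℝ := ![-s, -s, c - 1] with hQmdef
  have hQp0 : Qp 0 = s := rfl
  have hQp1 : Qp 1 = s := rfl
  have hQp2 : Qp 2 = c - 1 := rfl
  have hQm0 : Qm 0 = -s := rfl
  have hQm1 : Qm 1 = -s := rfl
  have hQm2 : Qm 2 = c - 1 := rfl
  have lorenz_class : ∀ q, lorenz a b c q = 0 → q = 0 ∨ q = Qp ∨ q = Qm := by
    intro q hq
    have e0 := congrFun hq 0
    have e1 := congrFun hq 1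
    have e2 := congrFun hq 2
    simp [lorenz] at e0 e1 e2
    have hyx : q 1 = q 0 := by
      rcases e0 with h | h
      · exact absurd h ha
      · linarith
    by_cases hx : q 0 = 0
    · left
      funext i; fin_cases i
      · simpa using hx
      · simpa using hyx.trans hx
      · have hb2 : b * q 2 = 0 := by rw [hx] at e2; linarith [e2]
        rcases mul_eq_zero.1 hb2 with hh | hh
        · exact absurd hh hb
        · simpa using hh
    · have hz : q 2 = c - 1 := by
        have hfac : q 0 * (c - 1 - q 2) = 0 := by
          linear_combination e1 + hyx
        rcases mul_eq_zero.1 hfac with hh | hh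
        · exact absurd hh hx
        · linarith
      have hx2 : (q 0 - s) * (q 0 + s) = 0 := by
        have : q 0 * q 0 = b * (c - 1) := by
          rw [← hz]; linear_combination e2 - q 0 * hyx
        nlinarith [hs2, this]
      rcases mul_eq_zero.1 hx2 with hh | hh
      · right; left
        funext i; fin_cases i <;> simp [hQpdef] <;> linarith [hyx, hz]
      · right; right
        funext i; fin_cases i <;> simp [hQmdef] <;> linarith [hyx, hz]
  -- invariants at equilibria
  have inv_at : ∀ p, chen a' b' c' p = 0 →
      (lorenzJ a b c (h p)).trace = (chenJ a' b' c' p).trace ∧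
      ((lorenzJ a b c (h p)) * (lorenzJ a b c (h p))).trace
        = ((chenJ a' b' c' p) * (chenJ a' b' c' p)).trace ∧
      (lorenzJ a b c (h p)).det = (chenJ a' b' c' p).det := by
    intro p hp
    have hcm := conj_matrix hch hmain hp
      (hasFDerivAt_chen a' b' c' p) (hasFDerivAt_lorenz a b c (h p))
    rw [toMatrix'_matCLM, toMatrix'_matCLM] at hcm
    exact conj_eqs (hmain p).1 hcm
  -- distinctness of chen equilibria
  have hEp_ne_0 : Ep ≠ 0 := by
    intro hcon
    have := congrFun hcon 0
    rw [hEp0] at this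
    simp at this
    linarith
  have hEm_ne_0 : Em ≠ 0 := by
    intro hcon
    have := congrFun hcon 0
    rw [hEm0] at this
    simp at this
    linarith
  have hEp_ne_Em : Ep ≠ Em := by
    intro hcon
    have := congrFun hcon 0
    rw [hEp0, hEm0] at this
    linarith
  -- case analysis on h 0
  rcases lorenz_class _ (lor_of 0 hchen0) with hq0 | hq0 | hq0
  · -- Case A : h 0 = 0
    obtain ⟨T, E1, D1⟩ := inv_at 0 hchen0
    rw [hq0] at T E1 D1
    rw [trace_lorenzJ, trace_chenJ] at T
    rw [trsq_lorenzJ, trsq_chenJ] at E1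
    rw [det_lorenzJ, det_chenJ] at D1
    simp only [Pi.zero_apply] at E1 D1
    -- h Ep ∈ {Qp, Qm}
    obtain ⟨T2, E2, D2⟩ := inv_at Ep hchenEp
    rcases lorenz_class _ (lor_of Ep hchenEp) with hq1 | hq1 | hq1
    · exact absurd (hinj (hq1.trans hq0.symm)) hEp_ne_0
    · rw [hq1] at E2
      rw [trsq_lorenzJ, trsq_chenJ] at E2
      rw [hQp0, hQp2, hEp0, hEp2] at E2
      have hu : a' + b' - c' = a + b + 1 := by linarith [T]
      have hv : a' ^ 2 + a' * b' - 2 * a' * c' - b' * c' = a * b + a + b - a * c := by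
        linear_combination ((a' + b' - c') + (a + b + 1)) / 2 * hu + (1 / 2) * E1
      have hw : -(a' * b' * (2 * c' - a')) = a * b * (1 - c) := by
        linear_combination D1
      have hd : b' * c' = a * b + b * c := by
        linear_combination ((a' + b' - c') + (a + b + 1)) / 2 * hu + (1 / 2) * E2
          + hs2 - ht2
      simp only [M0Chen]
      rw [hu, hv, hw, hd]
      exact M0_lorenz a b c
    · rw [hq1] at E2
      rw [trsq_lorenzJ, trsq_chenJ] at E2
      rw [hQm0, hQm2, hEp0, hEp2] at E2
      have hu : a' + b' - c' = a + b + 1 := by linarith [T]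
      have hv : a' ^ 2 + a' * b' - 2 * a' * c' - b' * c' = a * b + a + b - a * c := by
        linear_combination ((a' + b' - c') + (a + b + 1)) / 2 * hu + (1 / 2) * E1
      have hw : -(a' * b' * (2 * c' - a')) = a * b * (1 - c) := by
        linear_combination D1
      have hd : b' * c' = a * b + b * c := by
        linear_combination ((a' + b' - c') + (a + b + 1)) / 2 * hu + (1 / 2) * E2
          + hs2 - ht2
      simp only [M0Chen]
      rw [hu, hv, hw, hd]
      exact M0_lorenz a b c
  all_goals {
    -- Case B : h 0 = Qp or Qm ;  derive a contradiction
    exfalso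
    obtain ⟨-, -, DB1⟩ := inv_at 0 hchen0
    rw [hq0, det_lorenzJ, det_chenJ] at DB1
    simp only [Pi.zero_apply] at DB1
    first
      | rw [hQp0, hQp1, hQp2] at DB1
      | rw [hQm0, hQm1, hQm2] at DB1
    -- one of Ep, Em is sent to 0
    have hEcase : (∃ p, (p = Ep ∨ p = Em) ∧ h p = 0) := by
      rcases lorenz_class _ (lor_of Ep hchenEp) with hq1 | hq1 | hq1
      · exact ⟨Ep, Or.inl rfl, hq1⟩
      all_goals {
        rcases lorenz_class _ (lor_of Em hchenEm) with hq2 | hq2 | hq2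
        · exact ⟨Em, Or.inr rfl, hq2⟩
        all_goals {
          exfalso
          first
            | exact hEp_ne_0 (hinj (hq1.trans hq0.symm))
            | exact hEm_ne_0 (hinj (hq2.trans hq0.symm))
            | exact hEp_ne_Em (hinj (hq1.trans hq2.symm))
        }
      }
    obtain ⟨p, hpE, hp0⟩ := hEcase
    have hpchen : chen a' b' c' p = 0 := by
      rcases hpE with rfl | rfl
      · exact hchenEp
      · exact hchenEm
    obtain ⟨-, -, DB2⟩ := inv_at p hpchen
    rw [hp0, det_lorenzJ, det_chenJ] at DB2
    simp only [Pi.zero_apply] at DB2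
    have hp02 : (p 0) ^ 2 = t ^ 2 ∧ p 1 = p 0 ∧ p 2 = 2 * c' - a' := by
      rcases hpE with rfl | rfl
      · rw [hEp0, hEp1, hEp2]; exact ⟨rfl, rfl, rfl⟩
      · rw [hEm0, hEm1, hEm2]; exact ⟨by ring, rfl, rfl⟩
    obtain ⟨hpa, hpb, hpc⟩ := hp02
    have hp01 : p 0 * p 1 = t ^ 2 := by rw [hpb]; nlinarith [hpa]
    rw [hpa, hpc, hp01] at DB2
    have hW : a' * (b' * (2 * c' - a')) = 0 := by
      linear_combination (1/3 : ℝ) * DB1 + (2/3 : ℝ) * DB2 + (2*a/3) * hs2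
        - (4*a'/3) * ht2
    exact (mul_ne_zero ha' (ne_of_gt hbc')) hW
  }
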